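/- Let T be a finite tree rooted at a vertex r. Then for every vertex v of T, rho''(T_v) equals the sum over all children u of v of rho'(T_u). -/

import Mathlib

open scoped Classical

variable {V : Type*}

/-- Two edges `e₁, e₂` have a common edge in `H` if some edge of `H`, different from both,
joins an endvertex of `e₁` to an endvertex of `e₂`. -/
def HasCommonEdge (H : SimpleGraph V) (e₁ e₂ : Sym2 V) : Prop :=
  ∃ x y : V, x ∈ e₁ ∧ y ∈ e₂ ∧ H.Adj x y ∧ s(x, y) ≠ e₁ ∧ s(x, y) ≠ e₂

/-- `S` is an edge open packing set of `H`. -/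
def IsEOP (H : SimpleGraph V) (S : Set (Sym2 V)) : Prop :=
  S ⊆ H.edgeSet ∧ ∀ e₁ ∈ S, ∀ e₂ ∈ S, e₁ ≠ e₂ → ¬ HasCommonEdge H e₁ e₂

/-- The edge open packing number of `H`: the maximum cardinality of an EOP set of `H`. -/
noncomputable def eopNum (H : SimpleGraph V) : ℕ :=
  sSup {n | ∃ S : Set (Sym2 V), IsEOP H S ∧ S.ncard = n}

/-- `deg_S(x)`: the number of edges of `S` incident with `x`. -/
noncomputable def degS (S : Set (Sym2 V)) (x : V) : ℕ :=
  {e ∈ S | x ∈ e}.ncard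

/-- In the tree `T` rooted at `r`, the vertex `u` belongs to the subtree `T_v` (i.e. `u` is
`v` itself or a descendant of `v`) iff every walk from `u` to the root `r` passes through
`v`. -/
def InSubtree (T : SimpleGraph V) (r v u : V) : Prop :=
  ∀ p : T.Walk u r, v ∈ p.support

/-- The subtree `T_v` of the tree `T` rooted at `r`, induced by `v` together with all of its
descendants (realized as the subgraph of `T` on the same vertex set whose edges are exactly
the edges of `T` with both endvertices in `T_v`). -/
def subtree (T : SimpleGraph V) (r v : V) : SimpleGraph V where
  Adj a b := T.Adj a b ∧ InSubtree T r v a ∧ InSubtree T r v b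
  symm := ⟨by rintro a b ⟨h, ha, hb⟩; exact ⟨h.symm, hb, ha⟩⟩
  loopless := ⟨fun a h => T.irrefl h.1⟩

/-- `ρᶜ(H, v)`: the maximum cardinality of an EOP set `S` of `H` such that `deg_S(v) ≥ 1`
and every vertex joined to `v` by an edge of `S` has exactly one incident edge in `S`
(i.e. `v` is the center of a star of the subgraph induced by `S`); `0` if no such set
exists. -/
noncomputable def rhoC (H : SimpleGraph V) (v : V) : ℕ :=
  sSup {n | ∃ S : Set (Sym2 V), IsEOP H S ∧ 1 ≤ degS S v ∧
    (∀ u : V, s(v, u) ∈ S → degS S u = 1) ∧ S.ncard = n}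

/-- `ρˡ(H, v)`: the maximum cardinality of an EOP set `S` of `H` with `deg_S(v) = 1`
(i.e. `v` is a leaf of a star of the subgraph induced by `S`); `0` if no such set exists. -/
noncomputable def rhoL (H : SimpleGraph V) (v : V) : ℕ :=
  sSup {n | ∃ S : Set (Sym2 V), IsEOP H S ∧ degS S v = 1 ∧ S.ncard = n}

/-- `ρ'(H, v)`: the maximum cardinality of an EOP set `S` of `H` with `deg_S(v) = 0`. -/
noncomputable def rhoP (H : SimpleGraph V) (v : V) : ℕ :=
  sSup {n | ∃ S : Set (Sym2 V), IsEOP H S ∧ degS S v = 0 ∧ S.ncard = n}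

/-- `ρ''(H, v)`: the maximum cardinality of an EOP set `S` of `H` with `deg_S(x) = 0` for
every vertex `x` in the closed neighborhood of `v` in `H`. -/
noncomputable def rhoPP (H : SimpleGraph V) (v : V) : ℕ :=
  sSup {n | ∃ S : Set (Sym2 V), IsEOP H S ∧
    (∀ x : V, x = v ∨ H.Adj v x → degS S x = 0) ∧ S.ncard = n}

/-! The subtrees `T_u` of the children `u` of `v` are disjoint, and an edge of `T` leaving `T_u`
starts at `u`. So an EOP set of `T_v` avoiding the closed neighbourhood of `v` splits into EOP
sets of the `T_u` avoiding `u`; conversely such sets glue to one of `T_v`, since a common edge of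
two of their edges cannot leave a `T_u`. -/

open SimpleGraph

def children (T : SimpleGraph V) (r v : V) : Set V :=
  {u | T.Adj v u ∧ InSubtree T r v u}

section InSubtree

variable {T : SimpleGraph V} {r : V}

lemma inSubtree_refl (v : V) : InSubtree T r v v :=
  fun p => p.start_mem_support

lemma InSubtree.trans {u v w : V} (huv : InSubtree T r u v) (hvw : InSubtree T r v w) :
    InSubtree T r u w :=
  fun p => p.support_dropUntil_subset_support (hvw p) (huv _)

lemma InSubtree.of_adj {u a b : V} (ha : InSubtree T r u a) (hab : T.Adj a b) (hau : a ≠ u) :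
    InSubtree T r u b := fun p => by
  simpa [Ne.symm hau] using ha (Walk.cons hab p)

lemma SimpleGraph.IsAcyclic.eq_of_isPath (hT : T.IsAcyclic) {u w : V} {p q : T.Walk u w}
    (hp : p.IsPath) (hq : q.IsPath) : p = q :=
  congrArg Subtype.val ((hT.subsingleton_path u w).elim ⟨p, hp⟩ ⟨q, hq⟩)

lemma SimpleGraph.IsAcyclic.inSubtree_iff_mem_support (hT : T.IsAcyclic) {x w : V}
    {p : T.Walk w r} (hp : p.IsPath) : InSubtree T r x w ↔ x ∈ p.support := by
  refine ⟨fun h => h p, fun hx q => q.support_bypass_subset_support ?_⟩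
  rwa [hT.eq_of_isPath q.bypass_isPath hp]

lemma SimpleGraph.IsAcyclic.exists_child_of_mem_support (hT : T.IsAcyclic) {v w : V}
    {p : T.Walk w r} (hp : p.IsPath) (hv : v ∈ p.support) (hwv : w ≠ v) :
    ∃ u ∈ children T r v, InSubtree T r u w := by
  induction p with
  | nil => exact absurd (List.mem_singleton.1 hv).symm hwv
  | @cons w x _ hwx p ih =>
    have hp' := hp.of_cons
    by_cases hxv : x = v
    · subst hxv
      exact ⟨w, ⟨hwx.symm, (hT.inSubtree_iff_mem_support hp).2 hv⟩, inSubtree_refl w⟩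
    · have hvp : v ∈ p.support := by simpa [Ne.symm hwv] using hv
      obtain ⟨u, hu, hxu⟩ := ih hp' hvp hxv
      refine ⟨u, hu, (hT.inSubtree_iff_mem_support hp).2 ?_⟩
      exact List.mem_cons_of_mem w ((hT.inSubtree_iff_mem_support hp').1 hxu)

lemma SimpleGraph.IsTree.exists_child_inSubtree (hT : T.IsTree) {v w : V}
    (hw : InSubtree T r v w) (hwv : w ≠ v) :
    ∃ u ∈ children T r v, InSubtree T r u w :=
  let ⟨p, hp⟩ := hT.1.preconnected.exists_isPath w r
  hT.isAcyclic.exists_child_of_mem_support hp (hw p) hwv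

lemma SimpleGraph.IsTree.inSubtree_antisymm (hT : T.IsTree) {u v : V}
    (huv : InSubtree T r u v) (hvu : InSubtree T r v u) : u = v := by
  obtain ⟨p, hp⟩ := hT.1.preconnected.exists_isPath v r
  by_contra hne
  have hu := huv p
  have hv := hvu (p.dropUntil u hu)
  have hshorter : ((p.dropUntil u hu).dropUntil v hv).length < p.length :=
    (Walk.length_dropUntil_le_length _ _).trans_lt (Walk.length_dropUntil_lt_length hu hne)
  rw [hT.isAcyclic.eq_of_isPath ((hp.dropUntil hu).dropUntil hv) hp] at hshorter
  exact lt_irrefl _ hshorter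

lemma SimpleGraph.IsTree.inSubtree_total (hT : T.IsTree) {a b w : V}
    (ha : InSubtree T r a w) (hb : InSubtree T r b w) :
    InSubtree T r a b ∨ InSubtree T r b a := by
  obtain ⟨p, hp⟩ := hT.1.preconnected.exists_isPath w r
  have hsub := fun x (hx : x ∈ p.support) {y : V} (hy : y ∈ (p.dropUntil x hx).support) =>
    (hT.isAcyclic.inSubtree_iff_mem_support (hp.dropUntil hx)).2 hy
  rcases List.suffix_or_suffix_of_suffix (p.support_dropUntil_suffix_support (ha p))
      (p.support_dropUntil_suffix_support (hb p)) with h | h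
  · exact Or.inl (hsub b (hb p) (h.subset (Walk.start_mem_support _)))
  · exact Or.inr (hsub a (ha p) (h.subset (Walk.start_mem_support _)))

lemma SimpleGraph.IsTree.not_inSubtree_of_mem_children (hT : T.IsTree) {u v : V}
    (hu : u ∈ children T r v) : ¬ InSubtree T r u v :=
  fun huv => hu.1.ne (hT.inSubtree_antisymm hu.2 huv)

lemma SimpleGraph.IsTree.eq_of_mem_children_of_inSubtree (hT : T.IsTree) {v u₁ u₂ : V}
    (hu₁ : u₁ ∈ children T r v) (hu₂ : u₂ ∈ children T r v) (h : InSubtree T r u₁ u₂) :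
    u₁ = u₂ := by
  by_contra hne
  exact hT.not_inSubtree_of_mem_children hu₁ (h.of_adj hu₂.1.symm (Ne.symm hne))

lemma SimpleGraph.IsTree.eq_of_mem_children_of_inSubtree_of_inSubtree (hT : T.IsTree)
    {v u₁ u₂ w : V} (hu₁ : u₁ ∈ children T r v) (hu₂ : u₂ ∈ children T r v)
    (hw₁ : InSubtree T r u₁ w) (hw₂ : InSubtree T r u₂ w) : u₁ = u₂ := by
  rcases hT.inSubtree_total hw₁ hw₂ with h | h
  · exact hT.eq_of_mem_children_of_inSubtree hu₁ hu₂ h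
  · exact (hT.eq_of_mem_children_of_inSubtree hu₂ hu₁ h).symm

end InSubtree

section Subtree

variable {T : SimpleGraph V} {r : V}

lemma subtree_mono {u v : V} (hu : InSubtree T r v u) : subtree T r u ≤ subtree T r v :=
  fun _ _ hab => ⟨hab.1, hu.trans hab.2.1, hu.trans hab.2.2⟩

lemma subtree_adj_root_iff {v u : V} : (subtree T r v).Adj v u ↔ u ∈ children T r v :=
  ⟨fun h => ⟨h.1, h.2.2⟩, fun h => ⟨h.1, inSubtree_refl v, h.2⟩⟩

lemma inSubtree_of_mem_edgeSet_subtree {u x : V} {e : Sym2 V}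
    (he : e ∈ (subtree T r u).edgeSet) (hx : x ∈ e) : InSubtree T r u x := by
  induction e using Sym2.ind with
  | _ a b => rcases Sym2.mem_iff.1 hx with rfl | rfl <;> [exact he.2.1; exact he.2.2]

lemma SimpleGraph.IsTree.exists_mem_children_mem_edgeSet (hT : T.IsTree) {v : V}
    {e : Sym2 V} (he : e ∈ (subtree T r v).edgeSet) (hv : v ∉ e)
    (hchildren : ∀ u ∈ children T r v, u ∉ e) :
    ∃ u ∈ children T r v, e ∈ (subtree T r u).edgeSet := by
  induction e using Sym2.ind with
  | _ a b =>
    obtain ⟨hab, ha, -⟩ := he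
    obtain ⟨u, hu, hua⟩ := hT.exists_child_inSubtree ha (by rintro rfl; simp at hv)
    have hau : a ≠ u := by rintro rfl; simpa using hchildren a hu
    exact ⟨u, hu, hab, hua, hua.of_adj hab hau⟩

lemma SimpleGraph.IsTree.pairwiseDisjoint_edgeSet_subtree (hT : T.IsTree) (v : V) :
    (children T r v).PairwiseDisjoint fun u => (subtree T r u).edgeSet := by
  intro u₁ hu₁ u₂ hu₂ hne
  refine Set.disjoint_left.2 fun e he₁ he₂ => ?_
  induction e using Sym2.ind with
  | _ a b =>
    exact hne (hT.eq_of_mem_children_of_inSubtree_of_inSubtree hu₁ hu₂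
      (inSubtree_of_mem_edgeSet_subtree he₁ (Sym2.mem_mk_left a b))
      (inSubtree_of_mem_edgeSet_subtree he₂ (Sym2.mem_mk_left a b)))

lemma SimpleGraph.IsTree.eq_of_mem_edgeSet_subtree_child (hT : T.IsTree) {v u x : V}
    {e : Sym2 V} (hu : u ∈ children T r v) (he : e ∈ (subtree T r u).edgeSet) (hxe : x ∈ e)
    (hx : x = v ∨ x ∈ children T r v) : x = u := by
  have hux := inSubtree_of_mem_edgeSet_subtree he hxe
  rcases hx with rfl | hx
  · exact absurd hux (hT.not_inSubtree_of_mem_children hu)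
  · exact hT.eq_of_mem_children_of_inSubtree_of_inSubtree hx hu (inSubtree_refl x) hux

end Subtree

section EOP

lemma HasCommonEdge.mono {H H' : SimpleGraph V} {e₁ e₂ : Sym2 V} (h : HasCommonEdge H' e₁ e₂)
    (hle : H' ≤ H) : HasCommonEdge H e₁ e₂ :=
  let ⟨x, y, hx, hy, hxy, h₁, h₂⟩ := h
  ⟨x, y, hx, hy, hle hxy, h₁, h₂⟩

lemma isEOP_empty (H : SimpleGraph V) : IsEOP H ∅ :=
  ⟨Set.empty_subset _, fun _ h => absurd h (Set.notMem_empty _)⟩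

lemma IsEOP.mono {H H' : SimpleGraph V} {S S' : Set (Sym2 V)} (hS : IsEOP H S) (hle : H' ≤ H)
    (hS'S : S' ⊆ S) (hS' : S' ⊆ H'.edgeSet) : IsEOP H' S' :=
  ⟨hS', fun e₁ h₁ e₂ h₂ hne hc => hS.2 e₁ (hS'S h₁) e₂ (hS'S h₂) hne (hc.mono hle)⟩

variable {T : SimpleGraph V} {r : V}

lemma SimpleGraph.IsTree.isEOP_biUnion_children (hT : T.IsTree) {v : V} {g : V → Set (Sym2 V)}
    (hg : ∀ u ∈ children T r v, IsEOP (subtree T r u) (g u))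
    (hgu : ∀ u ∈ children T r v, ∀ e ∈ g u, u ∉ e) :
    IsEOP (subtree T r v) (⋃ u ∈ children T r v, g u) := by
  refine ⟨Set.iUnion₂_subset fun u hu =>
    (hg u hu).1.trans (edgeSet_subset_edgeSet.2 (subtree_mono hu.2)), ?_⟩
  intro e₁ he₁ e₂ he₂ hne ⟨x, y, hx, hy, hxy, h₁, h₂⟩
  simp only [Set.mem_iUnion] at he₁ he₂
  obtain ⟨u₁, hu₁, he₁⟩ := he₁
  obtain ⟨u₂, hu₂, he₂⟩ := he₂
  have hx₁ := inSubtree_of_mem_edgeSet_subtree ((hg u₁ hu₁).1 he₁) hx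
  have hy₁ : InSubtree T r u₁ y :=
    hx₁.of_adj hxy.1 fun hxu => hgu u₁ hu₁ e₁ he₁ (hxu ▸ hx)
  obtain rfl : u₁ = u₂ := hT.eq_of_mem_children_of_inSubtree_of_inSubtree hu₁ hu₂ hy₁
    (inSubtree_of_mem_edgeSet_subtree ((hg u₂ hu₂).1 he₂) hy)
  exact (hg u₁ hu₁).2 e₁ he₁ e₂ he₂ hne ⟨x, y, hx, hy, ⟨hxy.1, hx₁, hy₁⟩, h₁, h₂⟩

end EOP

section Finite

variable [Finite V]

lemma degS_eq_zero_iff {S : Set (Sym2 V)} {x : V} : degS S x = 0 ↔ ∀ e ∈ S, x ∉ e := by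
  rw [degS, Set.ncard_eq_zero (Set.toFinite _), Set.eq_empty_iff_forall_notMem]
  simp only [Set.mem_ofPred_eq, not_and]

lemma isGreatest_rhoP (H : SimpleGraph V) (u : V) :
    IsGreatest {n | ∃ S, IsEOP H S ∧ degS S u = 0 ∧ S.ncard = n} (rhoP H u) := by
  have hbdd : BddAbove {n | ∃ S, IsEOP H S ∧ degS S u = 0 ∧ S.ncard = n} :=
    ⟨Nat.card (Sym2 V), by rintro _ ⟨S, -, -, rfl⟩; exact S.ncard_le_card⟩
  refine ⟨Nat.sSup_mem ⟨0, ∅, isEOP_empty H, ?_, Set.ncard_empty _⟩ hbdd, fun _ => le_csSup hbdd⟩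
  exact degS_eq_zero_iff.2 fun _ h => absurd h (Set.notMem_empty _)

lemma isGreatest_rhoPP (H : SimpleGraph V) (v : V) :
    IsGreatest {n | ∃ S, IsEOP H S ∧ (∀ x, x = v ∨ H.Adj v x → degS S x = 0) ∧ S.ncard = n}
      (rhoPP H v) := by
  have hbdd : BddAbove
      {n | ∃ S, IsEOP H S ∧ (∀ x, x = v ∨ H.Adj v x → degS S x = 0) ∧ S.ncard = n} :=
    ⟨Nat.card (Sym2 V), by rintro _ ⟨S, -, -, rfl⟩; exact S.ncard_le_card⟩
  refine ⟨Nat.sSup_mem ⟨0, ∅, isEOP_empty H, fun _ _ => ?_, Set.ncard_empty _⟩ hbdd,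
    fun _ => le_csSup hbdd⟩
  exact degS_eq_zero_iff.2 fun _ h => absurd h (Set.notMem_empty _)

variable {T : SimpleGraph V} {r : V}

lemma SimpleGraph.IsTree.rhoPP_subtree_le (hT : T.IsTree) (v : V) :
    rhoPP (subtree T r v) v ≤ ∑ᶠ u ∈ children T r v, rhoP (subtree T r u) u := by
  obtain ⟨S, hS, hSv, hcard⟩ := (isGreatest_rhoPP (subtree T r v) v).1
  have hvS : ∀ e ∈ S, v ∉ e := degS_eq_zero_iff.1 (hSv v (Or.inl rfl))
  have hchildrenS : ∀ u ∈ children T r v, ∀ e ∈ S, u ∉ e :=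
    fun u hu => degS_eq_zero_iff.1 (hSv u (Or.inr (subtree_adj_root_iff.2 hu)))
  have hcover : S = ⋃ u ∈ children T r v, S ∩ (subtree T r u).edgeSet := by
    refine (Set.iUnion₂_subset fun _ _ => Set.inter_subset_left).antisymm' fun e he => ?_
    obtain ⟨u, hu, heu⟩ := hT.exists_mem_children_mem_edgeSet (hS.1 he) (hvS e he)
      fun u hu => hchildrenS u hu e he
    exact Set.mem_biUnion hu ⟨he, heu⟩
  have hfin := Set.toFinite (children T r v)
  rw [← hcard, hcover, hfin.ncard_biUnion (fun _ _ => Set.toFinite _)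
    ((hT.pairwiseDisjoint_edgeSet_subtree v).mono_on fun _ _ => Set.inter_subset_right),
    finsum_mem_eq_finite_toFinset_sum _ hfin, finsum_mem_eq_finite_toFinset_sum _ hfin]
  refine Finset.sum_le_sum fun u hu => (isGreatest_rhoP _ u).2 ?_
  rw [Set.Finite.mem_toFinset] at hu
  exact ⟨_, hS.mono (subtree_mono hu.2) Set.inter_subset_left Set.inter_subset_right,
    degS_eq_zero_iff.2 fun e he => hchildrenS u hu e he.1, rfl⟩

lemma SimpleGraph.IsTree.le_rhoPP_subtree (hT : T.IsTree) (v : V) :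
    ∑ᶠ u ∈ children T r v, rhoP (subtree T r u) u ≤ rhoPP (subtree T r v) v := by
  choose g hg hgu hcard using fun u => (isGreatest_rhoP (subtree T r u) u).1
  have hgu' : ∀ u, ∀ e ∈ g u, u ∉ e := fun u => degS_eq_zero_iff.1 (hgu u)
  have hS : IsEOP (subtree T r v) (⋃ u ∈ children T r v, g u) :=
    hT.isEOP_biUnion_children (fun u _ => hg u) fun u _ => hgu' u
  have hSv : ∀ x, x = v ∨ (subtree T r v).Adj v x → degS (⋃ u ∈ children T r v, g u) x = 0 := by
    refine fun x hx => degS_eq_zero_iff.2 fun e he hxe => ?_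
    obtain ⟨u, hu, heu⟩ := Set.mem_iUnion₂.1 he
    obtain rfl := hT.eq_of_mem_edgeSet_subtree_child hu ((hg u).1 heu) hxe
      (hx.imp_right subtree_adj_root_iff.1)
    exact hgu' x e heu hxe
  calc ∑ᶠ u ∈ children T r v, rhoP (subtree T r u) u
      = ∑ᶠ u ∈ children T r v, (g u).ncard := finsum_mem_congr rfl fun u _ => (hcard u).symm
    _ = (⋃ u ∈ children T r v, g u).ncard :=
      ((Set.toFinite _).ncard_biUnion (fun _ _ => Set.toFinite _)
        ((hT.pairwiseDisjoint_edgeSet_subtree v).mono_on fun u _ => (hg u).1)).symm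
    _ ≤ rhoPP (subtree T r v) v := (isGreatest_rhoPP _ v).2 ⟨_, hS, hSv, rfl⟩

end Finite

theorem stmt18 [Fintype V] (T : SimpleGraph V) (hT : T.IsTree) (r v : V) :
    rhoPP (subtree T r v) v =
      ∑ᶠ u ∈ {u : V | T.Adj v u ∧ InSubtree T r v u}, rhoP (subtree T r u) u :=
  (hT.rhoPP_subtree_le v).antisymm (hT.le_rhoPP_subtree v)
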